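/- arXiv:2209.15450 — 2 statements merged into one kernel-verified Lean document; each statement's English description precedes it below -/
import Mathlib

section
/- The gradient of the loss L is Lipschitz continuous: for all u, v ∈ ℝ^d, ‖∇L(u) − ∇L(v)‖₂ ≤ ( (1+λ₂)·M² + λ₃ ) · ‖u − v‖₂, where M = max_{1≤j≤N} ‖x_j‖₂. (Lemma 1 of the paper, with the explicit Lipschitz constant obtained from its Hessian bound.) -/
open scoped RealInnerProductSpace BigOperators

/-!
The gradient of `w ↦ log ∑_{j ∈ R} exp ⟪y_j, w⟫` is the softmax-weighted mean of the `y_j`.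
Along the segment from `v` to `u`, the derivative of `⟪mean, e⟫` is the softmax-weighted
covariance of `⟪y_j, e⟫` and `⟪y_j, u - v⟫`, which Cauchy–Schwarz bounds by `M ‖e‖ · M ‖u - v‖`.
Taking for `e` the difference of the two means shows that the mean is `M²`-Lipschitz. The
masked vectors `P x_j` are no longer than the `x_j`, so the second term of `L` contributes
`λ₂ M²`, and the ridge term contributes `λ₃`.
-/

open Finset Real

section WeightedCovariance

variable {ι : Type*} {t : Finset ι} {p a c : ι → ℝ} {A C : ℝ}

theorem sum_mul_sub_mul_sub_eq (hp1 : ∑ j ∈ t, p j = 1) :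
    ∑ j ∈ t, p j * ((a j - ∑ k ∈ t, p k * a k) * (c j - ∑ k ∈ t, p k * c k)) =
      ∑ j ∈ t, p j * (a j * c j) - (∑ j ∈ t, p j * a j) * ∑ j ∈ t, p j * c j := by
  set a' := ∑ k ∈ t, p k * a k
  set c' := ∑ k ∈ t, p k * c k
  have hterm : ∀ j, p j * ((a j - a') * (c j - c')) =
      p j * (a j * c j) - c' * (p j * a j) - a' * (p j * c j) + a' * c' * p j := fun j => by ring
  simp only [hterm, sum_add_distrib, sum_sub_distrib, ← mul_sum, hp1]
  ring

theorem sum_mul_sub_mul_sub_self_le (hp : ∀ j ∈ t, 0 ≤ p j) (hp1 : ∑ j ∈ t, p j = 1)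
    (ha : ∀ j ∈ t, |a j| ≤ A) :
    ∑ j ∈ t, p j * ((a j - ∑ k ∈ t, p k * a k) * (a j - ∑ k ∈ t, p k * a k)) ≤ A ^ 2 := by
  rw [sum_mul_sub_mul_sub_eq hp1]
  calc _ ≤ ∑ j ∈ t, p j * (a j * a j) := sub_le_self _ (mul_self_nonneg _)
    _ ≤ ∑ j ∈ t, p j * A ^ 2 := sum_le_sum fun j hj => mul_le_mul_of_nonneg_left
        (by rw [← sq, ← sq_abs]; exact pow_le_pow_left₀ (abs_nonneg _) (ha j hj) 2) (hp j hj)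
    _ = A ^ 2 := by rw [← sum_mul, hp1, one_mul]

theorem abs_sum_mul_mul_sub_sum_mul_mul_sum_le (hp : ∀ j ∈ t, 0 ≤ p j)
    (hp1 : ∑ j ∈ t, p j = 1) (ha : ∀ j ∈ t, |a j| ≤ A) (hc : ∀ j ∈ t, |c j| ≤ C) :
    |∑ j ∈ t, p j * (a j * c j) - (∑ j ∈ t, p j * a j) * ∑ j ∈ t, p j * c j| ≤ A * C := by
  obtain ⟨j₀, hj₀⟩ : t.Nonempty := nonempty_of_sum_ne_zero (hp1 ▸ one_ne_zero)
  have hAC : 0 ≤ A * C :=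
    mul_nonneg ((abs_nonneg _).trans (ha j₀ hj₀)) ((abs_nonneg _).trans (hc j₀ hj₀))
  rw [← sum_mul_sub_mul_sub_eq hp1]
  refine abs_le_of_sq_le_sq ?_ hAC
  calc _ ≤ (∑ j ∈ t, p j * ((a j - ∑ k ∈ t, p k * a k) * (a j - ∑ k ∈ t, p k * a k))) *
        ∑ j ∈ t, p j * ((c j - ∑ k ∈ t, p k * c k) * (c j - ∑ k ∈ t, p k * c k)) :=
        sum_sq_le_sum_mul_sum_of_sq_le_mul t
          (fun j hj => mul_nonneg (hp j hj) (mul_self_nonneg _))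
          (fun j hj => mul_nonneg (hp j hj) (mul_self_nonneg _)) fun j _ => le_of_eq (by ring)
    _ ≤ A ^ 2 * C ^ 2 := mul_le_mul (sum_mul_sub_mul_sub_self_le hp hp1 ha)
        (sum_mul_sub_mul_sub_self_le hp hp1 hc)
        (sum_nonneg fun j hj => mul_nonneg (hp j hj) (mul_self_nonneg _)) (sq_nonneg _)
    _ = (A * C) ^ 2 := by ring

end WeightedCovariance

section Softmax

variable {ι : Type*} {t : Finset ι}

noncomputable def softmax (t : Finset ι) (b : ι → ℝ) (j : ι) : ℝ :=
  exp (b j) / ∑ k ∈ t, exp (b k)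

theorem softmax_nonneg (b : ι → ℝ) (j : ι) : 0 ≤ softmax t b j :=
  div_nonneg (exp_pos _).le (sum_nonneg fun _ _ => (exp_pos _).le)

theorem sum_softmax (ht : t.Nonempty) (b : ι → ℝ) : ∑ j ∈ t, softmax t b j = 1 := by
  simp only [softmax]
  rw [← sum_div, div_self (sum_pos (fun _ _ => exp_pos _) ht).ne']

theorem hasDerivAt_softmax_add_mul (ht : t.Nonempty) (b c : ι → ℝ) (j : ι) (s : ℝ) :
    HasDerivAt (fun s => softmax t (fun k => b k + s * c k) j)
      (softmax t (fun k => b k + s * c k) j *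
        (c j - ∑ k ∈ t, softmax t (fun k => b k + s * c k) k * c k)) s := by
  have hexp (k : ι) : HasDerivAt (fun s => exp (b k + s * c k)) (exp (b k + s * c k) * c k) s :=
    ((hasDerivAt_mul_const (c k)).const_add (b k)).exp
  have hZ : 0 < ∑ k ∈ t, exp (b k + s * c k) := sum_pos (fun _ _ => exp_pos _) ht
  refine ((hexp j).div (HasDerivAt.fun_sum fun k _ => hexp k) hZ.ne').congr_deriv ?_
  simp only [softmax, div_mul_eq_mul_div, ← sum_div]
  field_simp

theorem hasDerivAt_sum_softmax_add_mul_mul (ht : t.Nonempty) (a b c : ι → ℝ) (s : ℝ) :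
    HasDerivAt (fun s => ∑ j ∈ t, softmax t (fun k => b k + s * c k) j * a j)
      (∑ j ∈ t, softmax t (fun k => b k + s * c k) j * (a j * c j) -
        (∑ j ∈ t, softmax t (fun k => b k + s * c k) j * a j) *
          ∑ j ∈ t, softmax t (fun k => b k + s * c k) j * c j) s := by
  refine (HasDerivAt.fun_sum fun j _ =>
    (hasDerivAt_softmax_add_mul ht b c j s).mul_const (a j)).congr_deriv ?_
  simp only [mul_sub, sub_mul, sum_sub_distrib, sum_mul]
  congr 1
  · exact sum_congr rfl fun j _ => by ring
  · exact sum_congr rfl fun j _ => by ring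

theorem abs_sum_softmax_add_mul_sub_le (ht : t.Nonempty) {a b c : ι → ℝ} {A C : ℝ}
    (ha : ∀ j ∈ t, |a j| ≤ A) (hc : ∀ j ∈ t, |c j| ≤ C) :
    |∑ j ∈ t, softmax t (fun k => b k + c k) j * a j - ∑ j ∈ t, softmax t b j * a j| ≤ A * C := by
  simpa using norm_image_sub_le_of_norm_deriv_le_segment_01'
    (fun s _ => (hasDerivAt_sum_softmax_add_mul_mul ht a b c s).hasDerivWithinAt)
    fun s _ => abs_sum_mul_mul_sub_sum_mul_mul_sum_le (fun j _ => softmax_nonneg _ j)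
      (sum_softmax ht _) ha hc

end Softmax

section SoftmaxMean

variable {ι F : Type*} [NormedAddCommGroup F] [InnerProductSpace ℝ F] {t : Finset ι}

noncomputable def softmaxMean (t : Finset ι) (y : ι → F) (w : F) : F :=
  ∑ j ∈ t, softmax t (fun k => ⟪y k, w⟫) j • y j

theorem inner_softmaxMean (t : Finset ι) (y : ι → F) (w e : F) :
    ⟪softmaxMean t y w, e⟫ = ∑ j ∈ t, softmax t (fun k => ⟪y k, w⟫) j * ⟪y j, e⟫ := by
  simp only [softmaxMean, sum_inner, real_inner_smul_left]

theorem norm_softmaxMean_sub_le (ht : t.Nonempty) {y : ι → F} {M : ℝ}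
    (hM : ∀ j ∈ t, ‖y j‖ ≤ M) (u v : F) :
    ‖softmaxMean t y u - softmaxMean t y v‖ ≤ M ^ 2 * ‖u - v‖ := by
  set e := softmaxMean t y u - softmaxMean t y v
  have hinner (z : F) : ∀ j ∈ t, |⟪y j, z⟫| ≤ M * ‖z‖ := fun j hj =>
    (abs_real_inner_le_norm _ _).trans (mul_le_mul_of_nonneg_right (hM j hj) (norm_nonneg _))
  -- `‖e‖ ^ 2 = ⟪e, e⟫` is the increment of the softmax average of `⟪y j, e⟫` from `v` to `u`
  have key : ‖e‖ ^ 2 ≤ M * ‖e‖ * (M * ‖u - v‖) := by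
    have h := abs_sum_softmax_add_mul_sub_le ht (b := fun k => ⟪y k, v⟫) (hinner e)
      (hinner (u - v))
    simp only [inner_sub_right, add_sub_cancel] at h
    rw [← inner_softmaxMean, ← inner_softmaxMean, ← inner_sub_left,
      real_inner_self_eq_norm_sq] at h
    exact (le_abs_self _).trans h
  rcases (norm_nonneg e).eq_or_lt with he | he
  · rw [← he]
    positivity
  · exact le_of_mul_le_mul_left (by linarith) he

end SoftmaxMean

section GradientCalculus

variable {F : Type*} [NormedAddCommGroup F] [InnerProductSpace ℝ F] [CompleteSpace F]
  {f g : F → ℝ} {f' g' x : F}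

theorem HasGradientAt.add (hf : HasGradientAt f f' x) (hg : HasGradientAt g g' x) :
    HasGradientAt (fun w => f w + g w) (f' + g') x := by
  rw [hasGradientAt_iff_hasFDerivAt, map_add]
  exact hf.hasFDerivAt.add hg.hasFDerivAt

theorem HasGradientAt.sub (hf : HasGradientAt f f' x) (hg : HasGradientAt g g' x) :
    HasGradientAt (fun w => f w - g w) (f' - g') x := by
  rw [hasGradientAt_iff_hasFDerivAt, map_sub]
  exact hf.hasFDerivAt.sub hg.hasFDerivAt

theorem HasGradientAt.const_mul (c : ℝ) (hf : HasGradientAt f f' x) :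
    HasGradientAt (fun w => c * f w) (c • f') x := by
  rw [hasGradientAt_iff_hasFDerivAt, map_smulₛₗ]
  exact hf.hasFDerivAt.const_mul c

theorem HasGradientAt.sum {ι : Type*} {t : Finset ι} {f : ι → F → ℝ} {f' : ι → F}
    (hf : ∀ i ∈ t, HasGradientAt (f i) (f' i) x) :
    HasGradientAt (fun w => ∑ i ∈ t, f i w) (∑ i ∈ t, f' i) x := by
  rw [hasGradientAt_iff_hasFDerivAt, map_sum]
  exact HasFDerivAt.fun_sum fun i hi => (hf i hi).hasFDerivAt

theorem HasDerivAt.comp_hasGradientAt {h : ℝ → ℝ} {h' : ℝ} (hh : HasDerivAt h h' (f x))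
    (hf : HasGradientAt f f' x) : HasGradientAt (fun w => h (f w)) (h' • f') x := by
  rw [hasGradientAt_iff_hasFDerivAt, map_smulₛₗ]
  exact hh.comp_hasFDerivAt x hf.hasFDerivAt

theorem hasGradientAt_inner_right (v x : F) : HasGradientAt (fun w => ⟪v, w⟫) v x := by
  rw [hasGradientAt_iff_hasFDerivAt]
  exact (innerSL ℝ v).hasFDerivAt

theorem hasGradientAt_norm_sq (x : F) : HasGradientAt (fun w => ‖w‖ ^ 2) ((2 : ℝ) • x) x := by
  rw [hasGradientAt_iff_hasFDerivAt, map_smulₛₗ, RCLike.conj_to_real, two_smul,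
    ← two_smul ℕ]
  exact (hasStrictFDerivAt_norm_sq x).hasFDerivAt

end GradientCalculus

section CoxLoss

variable {ι F : Type*} [NormedAddCommGroup F] [InnerProductSpace ℝ F]
  {S : Finset ι} {R : ι → Finset ι}

noncomputable def coxLoss (S : Finset ι) (R : ι → Finset ι) (y : ι → F) (w : F) : ℝ :=
  -(1 / #S) * ∑ i ∈ S, (⟪y i, w⟫ - log (∑ j ∈ R i, exp ⟪y j, w⟫))

noncomputable def coxLossGrad (S : Finset ι) (R : ι → Finset ι) (y : ι → F) (w : F) : F :=
  (1 / #S : ℝ) • ∑ i ∈ S, (softmaxMean (R i) y w - y i)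

theorem hasGradientAt_log_sum_exp_inner [CompleteSpace F] {t : Finset ι} (ht : t.Nonempty)
    (y : ι → F) (w : F) :
    HasGradientAt (fun w => log (∑ j ∈ t, exp ⟪y j, w⟫)) (softmaxMean t y w) w := by
  have hZ : 0 < ∑ j ∈ t, exp ⟪y j, w⟫ := sum_pos (fun _ _ => exp_pos _) ht
  have hsum : HasGradientAt (fun w => ∑ j ∈ t, exp ⟪y j, w⟫) (∑ j ∈ t, exp ⟪y j, w⟫ • y j) w :=
    HasGradientAt.sum fun j _ =>
      (hasDerivAt_exp _).comp_hasGradientAt (hasGradientAt_inner_right _ w)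
  have hmean : softmaxMean t y w = (∑ j ∈ t, exp ⟪y j, w⟫)⁻¹ • ∑ j ∈ t, exp ⟪y j, w⟫ • y j := by
    simp only [softmaxMean, softmax, smul_sum, smul_smul, div_eq_inv_mul]
  rw [hmean]
  exact (hasDerivAt_log hZ.ne').comp_hasGradientAt (f := fun w => ∑ j ∈ t, exp ⟪y j, w⟫) hsum

theorem hasGradientAt_coxLoss [CompleteSpace F] (hR : ∀ i ∈ S, (R i).Nonempty) (y : ι → F)
    (w : F) :
    HasGradientAt (coxLoss S R y) (coxLossGrad S R y w) w := by
  have hgrad :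
      coxLossGrad S R y w = -(1 / #S : ℝ) • ∑ i ∈ S, (y i - softmaxMean (R i) y w) := by
    rw [coxLossGrad, neg_smul, ← smul_neg, ← sum_neg_distrib]
    simp only [neg_sub]
  rw [hgrad]
  exact (HasGradientAt.sum fun i hi => (hasGradientAt_inner_right (y i) w).sub
    (hasGradientAt_log_sum_exp_inner (hR i hi) y w)).const_mul _

theorem norm_coxLossGrad_sub_le (hR : ∀ i ∈ S, (R i).Nonempty) {y : ι → F} {M : ℝ}
    (hM : ∀ j, ‖y j‖ ≤ M) (u v : F) :
    ‖coxLossGrad S R y u - coxLossGrad S R y v‖ ≤ M ^ 2 * ‖u - v‖ := by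
  have hsum : ‖∑ i ∈ S, ((softmaxMean (R i) y u - y i) - (softmaxMean (R i) y v - y i))‖ ≤
      #S * (M ^ 2 * ‖u - v‖) :=
    calc _ ≤ ∑ i ∈ S, ‖(softmaxMean (R i) y u - y i) - (softmaxMean (R i) y v - y i)‖ :=
          norm_sum_le _ _
      _ ≤ ∑ _i ∈ S, M ^ 2 * ‖u - v‖ := sum_le_sum fun i hi => by
          rw [sub_sub_sub_cancel_right]
          exact norm_softmaxMean_sub_le (hR i hi) (fun j _ => hM j) u v
      _ = #S * (M ^ 2 * ‖u - v‖) := by rw [sum_const, nsmul_eq_mul]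
  rw [coxLossGrad, coxLossGrad, ← smul_sub, ← sum_sub_distrib, norm_smul,
    Real.norm_of_nonneg (by positivity)]
  calc _ ≤ 1 / #S * (#S * (M ^ 2 * ‖u - v‖)) := by gcongr
    _ = (#S / #S : ℝ) * (M ^ 2 * ‖u - v‖) := by ring
    _ ≤ M ^ 2 * ‖u - v‖ := mul_le_of_le_one_left (by positivity) (div_self_le_one _)

end CoxLoss

section CoordinateMask

variable {ι : Type*} [Fintype ι] [DecidableEq ι] {K : Finset ι}
  {P : EuclideanSpace ℝ ι → EuclideanSpace ℝ ι}

theorem inner_coordMask_comm (hP : ∀ w a, P w a = if a ∈ K then w a else 0)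
    (x w : EuclideanSpace ℝ ι) : ⟪x, P w⟫ = ⟪P x, w⟫ := by
  simp only [PiLp.inner_apply, RCLike.inner_apply, conj_trivial, hP]
  exact sum_congr rfl fun a _ => by split_ifs <;> ring

theorem norm_coordMask_le (hP : ∀ w a, P w a = if a ∈ K then w a else 0)
    (x : EuclideanSpace ℝ ι) : ‖P x‖ ≤ ‖x‖ := by
  simp only [EuclideanSpace.norm_eq, hP]
  gcongr with a
  split_ifs <;> simp

end CoordinateMask

theorem excel_lemma_1_general
    (N d : ℕ) (x : Fin N → EuclideanSpace ℝ (Fin d)) (T : Fin N → ℝ)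
    (S : Finset (Fin N)) (N₁ : ℕ) (hN₁ : N₁ = S.card)
    (R : Fin N → Finset (Fin N))
    (hR : ∀ i, R i = Finset.univ.filter fun j => T i ≤ T j)
    (K : Finset (Fin d))
    (P : EuclideanSpace ℝ (Fin d) → EuclideanSpace ℝ (Fin d))
    (hP : ∀ w (a : Fin d), P w a = if a ∈ K then w a else 0)
    (lam2 lam3 : ℝ) (hlam2 : 0 < lam2) (hlam3 : 0 < lam3)
    (L : EuclideanSpace ℝ (Fin d) → ℝ)
    (hL : ∀ w, L w =
      -(1 / (N₁ : ℝ)) * ∑ i ∈ S, (⟪x i, w⟫ - Real.log (∑ j ∈ R i, Real.exp ⟪x j, w⟫))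
      - lam2 / (N₁ : ℝ) * ∑ i ∈ S, (⟪x i, P w⟫ - Real.log (∑ j ∈ R i, Real.exp ⟪x j, P w⟫))
      + lam3 / 2 * ‖w‖ ^ 2)
    (M : ℝ) (hM : IsGreatest (Set.range fun j => ‖x j‖) M) :
    ∀ u v : EuclideanSpace ℝ (Fin d),
      ‖gradient L u - gradient L v‖ ≤ ((1 + lam2) * M ^ 2 + lam3) * ‖u - v‖ := by
  intro u v
  subst hN₁
  set y := fun j => P (x j)
  have hRne : ∀ i ∈ S, (R i).Nonempty := fun i _ => ⟨i, by simp [hR]⟩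
  have hxM : ∀ j, ‖x j‖ ≤ M := fun j => hM.2 ⟨j, rfl⟩
  have hyM : ∀ j, ‖y j‖ ≤ M := fun j => (norm_coordMask_le hP (x j)).trans (hxM j)
  have hL' : L = fun w => coxLoss S R x w + lam2 * coxLoss S R y w + lam3 / 2 * ‖w‖ ^ 2 := by
    funext w
    simp only [hL, coxLoss, y, inner_coordMask_comm hP]
    ring
  have hgrad (w) :
      gradient L w = coxLossGrad S R x w + lam2 • coxLossGrad S R y w + lam3 • w := by
    rw [hL']
    refine HasGradientAt.gradient ?_
    convert ((hasGradientAt_coxLoss hRne x w).add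
      ((hasGradientAt_coxLoss hRne y w).const_mul lam2)).add
        ((hasGradientAt_norm_sq w).const_mul (lam3 / 2)) using 2
    rw [smul_smul]
    norm_num
  calc ‖gradient L u - gradient L v‖
      = ‖(coxLossGrad S R x u - coxLossGrad S R x v) +
          lam2 • (coxLossGrad S R y u - coxLossGrad S R y v) + lam3 • (u - v)‖ := by
        rw [hgrad, hgrad]
        congr 1
        module
    _ ≤ ‖coxLossGrad S R x u - coxLossGrad S R x v‖ +
          lam2 * ‖coxLossGrad S R y u - coxLossGrad S R y v‖ + lam3 * ‖u - v‖ := by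
        refine (norm_add₃_le).trans_eq ?_
        rw [norm_smul_of_nonneg hlam2.le, norm_smul_of_nonneg hlam3.le]
    _ ≤ M ^ 2 * ‖u - v‖ + lam2 * (M ^ 2 * ‖u - v‖) + lam3 * ‖u - v‖ := by
        gcongr
        exacts [norm_coxLossGrad_sub_le hRne hxM u v, norm_coxLossGrad_sub_le hRne hyM u v]
    _ = ((1 + lam2) * M ^ 2 + lam3) * ‖u - v‖ := by ring

/-- Lemma 1 of the paper: the gradient of the loss L is Lipschitz continuous with constant (1+λ₂)M² + λ₃, where M is the maximum Euclidean norm of the sample vectors. -/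
theorem excel_lemma_1
    (N d k : ℕ) (hN : 0 < N) (hd : 0 < d) (hk : 0 < k) (hkd : k ≤ d)
    (x : Fin N → EuclideanSpace ℝ (Fin d))
    (E : Fin N → ℕ) (hE : ∀ i, E i = 0 ∨ E i = 1)
    (T : Fin N → ℝ)
    (S : Finset (Fin N)) (hS : S = Finset.univ.filter fun i => E i = 1)
    (hSne : S.Nonempty)
    (N₁ : ℕ) (hN₁ : N₁ = S.card)
    (R : Fin N → Finset (Fin N))
    (hR : ∀ i, R i = Finset.univ.filter fun j => T i ≤ T j)
    (K : Finset (Fin d)) (hK : K.card = k)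
    (P : EuclideanSpace ℝ (Fin d) → EuclideanSpace ℝ (Fin d))
    (hP : ∀ w (a : Fin d), P w a = if a ∈ K then w a else 0)
    (lam2 lam3 : ℝ) (hlam2 : 0 < lam2) (hlam3 : 0 < lam3)
    (L : EuclideanSpace ℝ (Fin d) → ℝ)
    (hL : ∀ w, L w =
      -(1 / (N₁ : ℝ)) * ∑ i ∈ S, (⟪x i, w⟫ - Real.log (∑ j ∈ R i, Real.exp ⟪x j, w⟫))
      - lam2 / (N₁ : ℝ) * ∑ i ∈ S, (⟪x i, P w⟫ - Real.log (∑ j ∈ R i, Real.exp ⟪x j, P w⟫))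
      + lam3 / 2 * ‖w‖ ^ 2)
    (M : ℝ) (hM : IsGreatest (Set.range fun j => ‖x j‖) M) :
    ∀ u v : EuclideanSpace ℝ (Fin d),
      ‖gradient L u - gradient L v‖ ≤ ((1 + lam2) * M ^ 2 + lam3) * ‖u - v‖ :=
  excel_lemma_1_general N d x T S N₁ hN₁ R hR K P hP lam2 lam3 hlam2 hlam3 L hL M hM
end

section
/- Suppose the loss L is μ-strongly convex with μ = max{λ₂, λ₃}, and let ŵ ∈ ℝ^d be a global minimizer of L with ‖ŵ‖₂ ≤ C₀, where C₀ ≥ 0. Let C₁ ≥ 0 satisfy ∑_{i=1}^N ‖x_i‖₂ ≤ C₁. Then ‖ŵ − P_k ŵ‖₂² ≤ 4 C₀ C₁ √(d − k) / max{λ₂, λ₃}. (Corollary 1 of the paper.) -/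
/-!
Strong convexity at the minimiser gives `μ/2 ‖ŵ - P ŵ‖² ≤ L (P ŵ) - L ŵ`. As `P` is idempotent the
`λ₂`-terms of `L (P ŵ)` and `L ŵ` coincide, the ridge term can only drop, and the Cox partial
log-likelihood is `2 C₁`-Lipschitz (log-sum-exp is `1`-Lipschitz in the sup norm of its arguments),
so the gap is at most `2 C₁ ‖ŵ - P ŵ‖ ≤ 2 C₁ C₀`. The factor `√(d - k)` is at least `1` unless
`K` is everything, in which case `P ŵ = ŵ`.
-/

open scoped RealInnerProductSpace BigOperators

theorem Finset.one_le_sqrt_card_sub_card_of_ne_univ {ι : Type*} [Fintype ι] {K : Finset ι}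
    (hK : K ≠ Finset.univ) : 1 ≤ Real.sqrt ((Fintype.card ι : ℝ) - K.card) := by
  rw [Real.one_le_sqrt, le_sub_iff_add_le']
  exact_mod_cast (Finset.card_lt_iff_ne_univ K).2 hK

section Mask

variable {ι : Type*} [DecidableEq ι]

-- The projection `P_k` of the paper.
def maskCoords (K : Finset ι) (w : EuclideanSpace ℝ ι) : EuclideanSpace ℝ ι :=
  WithLp.toLp 2 fun a => if a ∈ K then w a else 0

variable (K : Finset ι) (w : EuclideanSpace ℝ ι)

@[simp]
theorem maskCoords_apply (a : ι) : maskCoords K w a = if a ∈ K then w a else 0 := rfl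

@[simp]
theorem maskCoords_maskCoords : maskCoords K (maskCoords K w) = maskCoords K w := by
  ext a
  by_cases ha : a ∈ K <;> simp [ha]

variable [Fintype ι]

@[simp]
theorem maskCoords_univ : maskCoords Finset.univ w = w := by
  ext a
  simp

theorem inner_maskCoords_sub_maskCoords : ⟪maskCoords K w, w - maskCoords K w⟫ = 0 := by
  rw [EuclideanSpace.inner_eq_star_dotProduct]
  refine Finset.sum_eq_zero fun a _ => ?_
  by_cases ha : a ∈ K <;> simp [ha]

theorem norm_sq_maskCoords_add_norm_sq_sub :
    ‖maskCoords K w‖ ^ 2 + ‖w - maskCoords K w‖ ^ 2 = ‖w‖ ^ 2 := by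
  have h := norm_add_sq_real (maskCoords K w) (w - maskCoords K w)
  rw [add_sub_cancel, inner_maskCoords_sub_maskCoords] at h
  linarith

theorem norm_sub_maskCoords_le : ‖w - maskCoords K w‖ ≤ ‖w‖ := by
  have := norm_sq_maskCoords_add_norm_sq_sub K w
  exact pow_le_pow_iff_left₀ (norm_nonneg _) (norm_nonneg _) two_ne_zero |>.1
    (by linarith [sq_nonneg ‖maskCoords K w‖])

end Mask

open Filter Topology Set in
theorem UniformConvexOn.le_sub_of_isMinOn {E : Type*} [NormedAddCommGroup E] [NormedSpace ℝ E]
    {s : Set E} {φ : ℝ → ℝ} {f : E → ℝ} {x y : E} (hf : UniformConvexOn s φ f)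
    (hmin : IsMinOn f s x) (hx : x ∈ s) (hy : y ∈ s) :
    φ ‖x - y‖ ≤ f y - f x := by
  have hstep : ∀ t ∈ Ioo (0 : ℝ) 1, (1 - t) * φ ‖x - y‖ ≤ f y - f x := by
    rintro t ⟨ht0, ht1⟩
    have hconv := hf.2 hx hy (sub_nonneg.2 ht1.le) ht0.le (sub_add_cancel 1 t)
    have hle := isMinOn_iff.1 hmin _ (hf.1 hx hy (sub_nonneg.2 ht1.le) ht0.le (sub_add_cancel 1 t))
    simp only [smul_eq_mul] at hconv
    refine le_of_mul_le_mul_left ?_ ht0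
    nlinarith
  have hlim : Tendsto (fun t : ℝ => (1 - t) * φ ‖x - y‖) (𝓝[>] 0) (𝓝 (φ ‖x - y‖)) := by
    have : Tendsto (fun t : ℝ => (1 - t) * φ ‖x - y‖) (𝓝 0) (𝓝 ((1 - 0) * φ ‖x - y‖)) :=
      (tendsto_const_nhds.sub tendsto_id).mul tendsto_const_nhds
    simpa using this.mono_left nhdsWithin_le_nhds
  exact le_of_tendsto hlim (eventually_of_mem (Ioo_mem_nhdsGT one_pos) hstep)

theorem Real.log_sum_exp_le_log_sum_exp_add {ι : Type*} {s : Finset ι} {a b : ι → ℝ} {c : ℝ}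
    (hc : 0 ≤ c) (hab : ∀ j ∈ s, a j ≤ b j + c) :
    Real.log (∑ j ∈ s, Real.exp (a j)) ≤ Real.log (∑ j ∈ s, Real.exp (b j)) + c := by
  rcases s.eq_empty_or_nonempty with rfl | hs
  · simpa using hc
  have hpos : 0 < ∑ j ∈ s, Real.exp (b j) := Finset.sum_pos (fun j _ => Real.exp_pos _) hs
  have hsum : ∑ j ∈ s, Real.exp (a j) ≤ (∑ j ∈ s, Real.exp (b j)) * Real.exp c := by
    rw [Finset.sum_mul]
    exact Finset.sum_le_sum fun j hj => by rw [← Real.exp_add]; exact Real.exp_le_exp.2 (hab j hj)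
  calc Real.log (∑ j ∈ s, Real.exp (a j))
      ≤ Real.log ((∑ j ∈ s, Real.exp (b j)) * Real.exp c) :=
        Real.log_le_log (Finset.sum_pos (fun j _ => Real.exp_pos _) hs) hsum
    _ = Real.log (∑ j ∈ s, Real.exp (b j)) + c := by
        rw [Real.log_mul hpos.ne' (Real.exp_pos c).ne', Real.log_exp]

theorem inner_sub_inner_le {E : Type*} [NormedAddCommGroup E] [InnerProductSpace ℝ E]
    {y : E} {C : ℝ} (hy : ‖y‖ ≤ C) (v w : E) : ⟪y, v⟫ - ⟪y, w⟫ ≤ C * ‖v - w‖ := by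
  rw [← inner_sub_right]
  exact (real_inner_le_norm _ _).trans (mul_le_mul_of_nonneg_right hy (norm_nonneg _))

section Cox

variable {ι E : Type*} [NormedAddCommGroup E] [InnerProductSpace ℝ E]

noncomputable def coxPartialLogLik (x : ι → E) (S : Finset ι) (R : ι → Finset ι) (w : E) : ℝ :=
  ∑ i ∈ S, (⟪x i, w⟫ - Real.log (∑ j ∈ R i, Real.exp ⟪x j, w⟫))

theorem coxPartialLogLik_sub_le {x : ι → E} {C : ℝ} (hC : ∀ i, ‖x i‖ ≤ C)
    (S : Finset ι) (R : ι → Finset ι) (v w : E) :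
    coxPartialLogLik x S R v - coxPartialLogLik x S R w ≤ S.card * (2 * C * ‖v - w‖) := by
  rw [coxPartialLogLik, coxPartialLogLik, ← Finset.sum_sub_distrib, ← nsmul_eq_mul]
  refine Finset.sum_le_card_nsmul _ _ _ fun i _ => ?_
  have hCvw : 0 ≤ C * ‖v - w‖ := mul_nonneg ((norm_nonneg _).trans (hC i)) (norm_nonneg _)
  have hlog := Real.log_sum_exp_le_log_sum_exp_add (s := R i) (a := fun j => ⟪x j, w⟫)
    (b := fun j => ⟪x j, v⟫) hCvw fun j _ => by
      have := inner_sub_inner_le (hC j) w v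
      rw [norm_sub_rev] at this
      linarith
  linarith [inner_sub_inner_le (hC i) v w]

theorem one_div_card_mul_coxPartialLogLik_sub_le {x : ι → E} {C : ℝ} (hC0 : 0 ≤ C)
    (hC : ∀ i, ‖x i‖ ≤ C) (S : Finset ι) (R : ι → Finset ι) (v w : E) :
    1 / (S.card : ℝ) * (coxPartialLogLik x S R v - coxPartialLogLik x S R w) ≤
      2 * C * ‖v - w‖ := by
  have hbound : 0 ≤ 2 * C * ‖v - w‖ := by positivity
  rcases eq_or_ne (S.card : ℝ) 0 with hS | hS
  · simpa [hS] using hbound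
  calc 1 / (S.card : ℝ) * (coxPartialLogLik x S R v - coxPartialLogLik x S R w)
      ≤ 1 / (S.card : ℝ) * (S.card * (2 * C * ‖v - w‖)) :=
        mul_le_mul_of_nonneg_left (coxPartialLogLik_sub_le hC S R v w) (by positivity)
    _ = 2 * C * ‖v - w‖ := by field_simp

variable {κ : Type*} [Fintype κ] [DecidableEq κ]

noncomputable def coxMaskedRidgeLoss (x : ι → EuclideanSpace ℝ κ) (S : Finset ι)
    (R : ι → Finset ι) (K : Finset κ) (lam2 lam3 : ℝ) (w : EuclideanSpace ℝ κ) : ℝ :=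
  -(1 / (S.card : ℝ)) * coxPartialLogLik x S R w
    - lam2 / (S.card : ℝ) * coxPartialLogLik x S R (maskCoords K w) + lam3 / 2 * ‖w‖ ^ 2

theorem coxMaskedRidgeLoss_maskCoords_sub_le {x : ι → EuclideanSpace ℝ κ} {C lam3 : ℝ}
    (hC0 : 0 ≤ C) (hC : ∀ i, ‖x i‖ ≤ C) (hlam3 : 0 ≤ lam3) (S : Finset ι) (R : ι → Finset ι)
    (K : Finset κ) (lam2 : ℝ) (w : EuclideanSpace ℝ κ) :
    coxMaskedRidgeLoss x S R K lam2 lam3 (maskCoords K w) - coxMaskedRidgeLoss x S R K lam2 lam3 w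
      ≤ 2 * C * ‖w - maskCoords K w‖ := by
  have hlik := one_div_card_mul_coxPartialLogLik_sub_le hC0 hC S R w (maskCoords K w)
  have hshrink := norm_sq_maskCoords_add_norm_sq_sub K w
  rw [coxMaskedRidgeLoss, coxMaskedRidgeLoss, maskCoords_maskCoords, ← hshrink]
  linarith [mul_nonneg hlam3 (sq_nonneg ‖w - maskCoords K w‖)]

end Cox

theorem excel_corollary_1_general
    (N d k : ℕ)
    (x : Fin N → EuclideanSpace ℝ (Fin d))
    (S : Finset (Fin N))
    (N₁ : ℕ) (hN₁ : N₁ = S.card)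
    (R : Fin N → Finset (Fin N))
    (K : Finset (Fin d)) (hK : K.card = k)
    (P : EuclideanSpace ℝ (Fin d) → EuclideanSpace ℝ (Fin d))
    (hP : ∀ w (a : Fin d), P w a = if a ∈ K then w a else 0)
    (lam2 lam3 : ℝ) (hlam3 : 0 < lam3)
    (L : EuclideanSpace ℝ (Fin d) → ℝ)
    (hL : ∀ w, L w =
      -(1 / (N₁ : ℝ)) * ∑ i ∈ S, (⟪x i, w⟫ - Real.log (∑ j ∈ R i, Real.exp ⟪x j, w⟫))
      - lam2 / (N₁ : ℝ) * ∑ i ∈ S, (⟪x i, P w⟫ - Real.log (∑ j ∈ R i, Real.exp ⟪x j, P w⟫))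
      + lam3 / 2 * ‖w‖ ^ 2)
    (hstrong : ConvexOn ℝ Set.univ fun w => L w - max lam2 lam3 / 2 * ‖w‖ ^ 2)
    (wh : EuclideanSpace ℝ (Fin d)) (hwh : ∀ w, L wh ≤ L w)
    (C₀ : ℝ) (hwhC₀ : ‖wh‖ ≤ C₀)
    (C₁ : ℝ) (hxC₁ : ∑ i : Fin N, ‖x i‖ ≤ C₁) :
    ‖wh - P wh‖ ^ 2 ≤ 4 * C₀ * C₁ * Real.sqrt ((d : ℝ) - (k : ℝ)) / max lam2 lam3 := by
  obtain rfl : P = maskCoords K := funext fun w => by ext a; rw [hP, maskCoords_apply]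
  subst hN₁ hK
  obtain rfl : L = coxMaskedRidgeLoss x S R K lam2 lam3 := funext hL
  have hμ : 0 < max lam2 lam3 := hlam3.trans_le (le_max_right _ _)
  have hC₀ : 0 ≤ C₀ := (norm_nonneg wh).trans hwhC₀
  have hC₁ : 0 ≤ C₁ := (Finset.sum_nonneg fun i _ => norm_nonneg (x i)).trans hxC₁
  have hx : ∀ i, ‖x i‖ ≤ C₁ := fun i =>
    (Finset.single_le_sum (fun j _ => norm_nonneg (x j)) (Finset.mem_univ i)).trans hxC₁
  have hgap := (coxMaskedRidgeLoss_maskCoords_sub_le hC₁ hx hlam3.le S R K lam2 wh).trans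
    (mul_le_mul_of_nonneg_left ((norm_sub_maskCoords_le K wh).trans hwhC₀) (by positivity))
  have hgrowth : max lam2 lam3 / 2 * ‖wh - maskCoords K wh‖ ^ 2 ≤ _ :=
    (strongConvexOn_iff_convex.2 hstrong).le_sub_of_isMinOn (isMinOn_univ_iff.2 hwh)
      (Set.mem_univ wh) (Set.mem_univ (maskCoords K wh))
  have hsq : ‖wh - maskCoords K wh‖ ^ 2 ≤ 4 * C₀ * C₁ / max lam2 lam3 := by
    rw [le_div_iff₀ hμ]
    linarith
  rcases eq_or_ne K Finset.univ with rfl | hK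
  · rw [maskCoords_univ, sub_self, norm_zero, zero_pow two_ne_zero]
    positivity
  have hsqrt := Finset.one_le_sqrt_card_sub_card_of_ne_univ hK
  rw [Fintype.card_fin] at hsqrt
  exact hsq.trans
    (div_le_div_of_nonneg_right (le_mul_of_one_le_right (by positivity) hsqrt) hμ.le)

/-- Corollary 1 of the paper. -/
theorem excel_corollary_1
    (N d k : ℕ) (hN : 0 < N) (hd : 0 < d) (hk : 0 < k) (hkd : k ≤ d)
    (x : Fin N → EuclideanSpace ℝ (Fin d))
    (E : Fin N → ℕ) (hE : ∀ i, E i = 0 ∨ E i = 1)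
    (T : Fin N → ℝ)
    (S : Finset (Fin N)) (hS : S = Finset.univ.filter fun i => E i = 1)
    (hSne : S.Nonempty)
    (N₁ : ℕ) (hN₁ : N₁ = S.card)
    (R : Fin N → Finset (Fin N))
    (hR : ∀ i, R i = Finset.univ.filter fun j => T i ≤ T j)
    (K : Finset (Fin d)) (hK : K.card = k)
    (P : EuclideanSpace ℝ (Fin d) → EuclideanSpace ℝ (Fin d))
    (hP : ∀ w (a : Fin d), P w a = if a ∈ K then w a else 0)
    (lam2 lam3 : ℝ) (hlam2 : 0 < lam2) (hlam3 : 0 < lam3)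
    (L : EuclideanSpace ℝ (Fin d) → ℝ)
    (hL : ∀ w, L w =
      -(1 / (N₁ : ℝ)) * ∑ i ∈ S, (⟪x i, w⟫ - Real.log (∑ j ∈ R i, Real.exp ⟪x j, w⟫))
      - lam2 / (N₁ : ℝ) * ∑ i ∈ S, (⟪x i, P w⟫ - Real.log (∑ j ∈ R i, Real.exp ⟪x j, P w⟫))
      + lam3 / 2 * ‖w‖ ^ 2)
    (hstrong : ConvexOn ℝ Set.univ fun w => L w - max lam2 lam3 / 2 * ‖w‖ ^ 2)
    (wh : EuclideanSpace ℝ (Fin d)) (hwh : ∀ w, L wh ≤ L w)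
    (C₀ : ℝ) (hC₀ : 0 ≤ C₀) (hwhC₀ : ‖wh‖ ≤ C₀)
    (C₁ : ℝ) (hC₁ : 0 ≤ C₁) (hxC₁ : ∑ i : Fin N, ‖x i‖ ≤ C₁) :
    ‖wh - P wh‖ ^ 2 ≤ 4 * C₀ * C₁ * Real.sqrt ((d : ℝ) - (k : ℝ)) / max lam2 lam3 :=
  excel_corollary_1_general N d k x S N₁ hN₁ R K hK P hP lam2 lam3 hlam3 L hL hstrong wh hwh C₀
    hwhC₀ C₁ hxC₁
end
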